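/- arXiv:1707.08856 — 8 statements merged into one kernel-verified Lean document; each statement's English description precedes it below -/
import Mathlib

section
/- Let q be a prime power with q ≥ 4 and let C be a linear code of length n over F_q. Then there exists a vector v ∈ F_q^n all of whose entries are nonzero such that the scaled code v*C is an LCD code, i.e. (v*C) ∩ (v*C)^⊥ = {0}. (In particular, C is monomial equivalent to an LCD code.) -/
/-!
Fix a generator matrix `W` of `C` (independent rows). The scaled code `v * C` is generated by
`W * diagonal v`, whose Gram matrix is `W * diagonal (v * v) * Wᵀ`, and `v * C` is LCD as soon as
this Gram matrix is nonsingular. Putting `v` equal to the indicator of an information set makes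
the Gram matrix `A * Aᵀ` with `A` a nonsingular maximal minor of `W`. Each coordinate `v i` enters
the Gram matrix only through the rank-one term `v i ^ 2 • cᵢ cᵢᵀ` (`cᵢ` the `i`-th column of `W`),
so the Gram determinant has the form `a + b * (v i) ^ 2` in each coordinate separately. Such a
function that is nonzero somewhere is nonzero at some nonzero point as soon as the field has at
least four elements; replacing the coordinates of `v` by nonzero values one at a time keeps the
Gram determinant nonzero.
-/

/-- The Euclidean dual of a linear code `C ⊆ F^n`. -/
def dualCode {F : Type*} [Field F] {n : ℕ} (C : Submodule F (Fin n → F)) :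
    Submodule F (Fin n → F) where
  carrier := {x | ∀ c ∈ C, ∑ i, x i * c i = 0}
  add_mem' := by
    intro x y hx hy c hc
    simp [add_mul, Finset.sum_add_distrib, hx c hc, hy c hc]
  zero_mem' := by
    intro c hc
    simp
  smul_mem' := by
    intro a x hx c hc
    simp [smul_eq_mul, mul_assoc, ← Finset.mul_sum, hx c hc]

open Matrix

theorem Function.exists_forall_ne_zero_of_forall_exists_update {ι α : Type*} [Fintype ι]
    [DecidableEq ι] [Zero α] (P : (ι → α) → Prop)
    (hP : ∀ v i, P v → ∃ t ≠ 0, P (Function.update v i t)) {v₀ : ι → α} (h₀ : P v₀) :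
    ∃ v, (∀ i, v i ≠ 0) ∧ P v := by
  suffices ∀ s : Finset ι, ∃ v, (∀ i ∈ s, v i ≠ 0) ∧ P v by simpa using this Finset.univ
  intro s
  induction s using Finset.induction_on with
  | empty => exact ⟨v₀, by simp, h₀⟩
  | insert a s _ ih =>
    obtain ⟨v, hv, hPv⟩ := ih
    obtain ⟨t, ht, hPt⟩ := hP v a hPv
    refine ⟨Function.update v a t, fun i hi => ?_, hPt⟩
    rcases eq_or_ne i a with rfl | hia
    · simpa
    · rw [Function.update_of_ne hia]
      exact hv i ((Finset.mem_insert.mp hi).resolve_left hia)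

theorem exists_ne_zero_add_mul_sq_ne_zero {K : Type*} [Field K] [Fintype K]
    (hK : 4 ≤ Fintype.card K) {a b t₀ : K} (h : a + b * t₀ ^ 2 ≠ 0) :
    ∃ t ≠ 0, a + b * t ^ 2 ≠ 0 := by
  classical
  by_contra! hzero
  obtain ⟨t, -, ht⟩ : ∃ t ∈ Finset.univ, t ∉ ({0, 1, -1} : Finset K) :=
    Finset.exists_mem_notMem_of_card_lt_card (Finset.card_le_three.trans_lt hK)
  simp only [Finset.mem_insert, Finset.mem_singleton, not_or] at ht
  obtain ⟨ht0, ht1, ht1'⟩ := ht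
  have hsq : t ^ 2 - 1 ≠ 0 := sub_ne_zero.mpr fun h => (sq_eq_one_iff.mp h).elim ht1 ht1'
  have hb : b = 0 := by
    have : b * (t ^ 2 - 1) = 0 := by linear_combination hzero t ht0 - hzero 1 one_ne_zero
    exact (mul_eq_zero.mp this).resolve_right hsq
  have ha : a = 0 := by simpa [hb] using hzero 1 one_ne_zero
  exact h (by simp [ha, hb])

namespace Matrix

variable {K : Type*} [Field K] {ι κ : Type*}

theorem exists_det_add_smul_vecMulVec_eq [Fintype ι] [DecidableEq ι] (B : Matrix ι ι K)
    (c w : ι → K) : ∃ a b : K, ∀ s : K, (B + s • vecMulVec c w).det = a + b * s := by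
  by_cases hc : c = 0
  · exact ⟨B.det, 0, fun s => by simp [hc]⟩
  obtain ⟨j, hj⟩ : ∃ j, c j ≠ 0 := Function.ne_iff.mp hc
  -- Subtracting multiples of row `j` from the other rows confines the dependence on `s` to row `j`.
  let N : Matrix ι ι K := of fun i l => B i l - c i / c j * B j l
  refine ⟨(N.updateRow j (B j)).det, c j * (N.updateRow j w).det, fun s => ?_⟩
  have hrow : (B + s • vecMulVec c w).det = (N.updateRow j (B j + (s * c j) • w)).det := by
    refine det_eq_of_forall_row_eq_smul_add_const (fun i => if i = j then 0 else c i / c j) j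
      (by simp) fun i l => ?_
    rcases eq_or_ne i j with rfl | hij
    · simp [vecMulVec_apply, mul_assoc]
    · simp only [add_apply, smul_apply, vecMulVec_apply, smul_eq_mul, if_neg hij, updateRow_ne hij,
        updateRow_self, of_apply, Pi.add_apply, Pi.smul_apply, N]
      field_simp
      ring
  rw [hrow, det_updateRow_add, det_updateRow_smul]
  ring

theorem mul_diagonal_update_mul_transpose [Fintype κ] [DecidableEq κ] (W : Matrix ι κ K)
    (d : κ → K) (i : κ) (s : K) :
    W * diagonal (Function.update d i s) * Wᵀ =
      W * diagonal (Function.update d i 0) * Wᵀ + s • vecMulVec (W.col i) (W.col i) := by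
  have hd : diagonal (Function.update d i s) =
      diagonal (Function.update d i 0) + diagonal (Pi.single i s) := by
    rw [diagonal_add]
    congr 1
    ext x
    rcases eq_or_ne x i with rfl | hx <;> simp [*]
  rw [hd, Matrix.mul_add, Matrix.add_mul]
  congr 1
  ext a b
  simp [mul_apply, vecMulVec_apply, diagonal_apply, Pi.single_apply, mul_comm, mul_left_comm]

theorem mul_diagonal_mul_transpose_mul_diagonal [Fintype κ] [DecidableEq κ] (W : Matrix ι κ K)
    (v : κ → K) : W * diagonal v * (W * diagonal v)ᵀ = W * diagonal (v * v) * Wᵀ := by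
  rw [transpose_mul, diagonal_transpose, Matrix.mul_assoc, ← Matrix.mul_assoc (diagonal v),
    diagonal_mul_diagonal, ← Matrix.mul_assoc]
  rfl

theorem exists_submatrix_det_ne_zero [Fintype ι] [DecidableEq ι] [Fintype κ]
    {W : Matrix ι κ K} (hW : LinearIndependent K W.row) :
    ∃ σ : ι → κ, σ.Injective ∧ (W.submatrix id σ).det ≠ 0 := by
  have hcols : Submodule.span K (Set.range W.col) = ⊤ :=
    Submodule.eq_top_of_finrank_eq <| by
      rw [← rank_eq_finrank_span_cols, hW.rank_matrix, Module.finrank_fintype_fun_eq_card]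
  obtain ⟨τ, a, ha, hspan, hli⟩ := exists_linearIndependent' K W.col
  let e : τ ≃ ι := (Module.Basis.mk hli (hspan.trans hcols).ge).indexEquiv (Pi.basisFun K ι)
  refine ⟨a ∘ e.symm, ha.comp e.symm.injective, ?_⟩
  have hunit : IsUnit (W.submatrix id (a ∘ e.symm)) :=
    linearIndependent_cols_iff_isUnit.mp (hli.comp e.symm e.symm.injective)
  exact ((isUnit_iff_isUnit_det _).mp hunit).ne_zero

theorem mul_diagonal_indicator_mul_transpose [Fintype ι] [Fintype κ] [DecidableEq κ]
    (W : Matrix ι κ K) {σ : ι → κ} (hσ : σ.Injective) :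
    W * diagonal (fun x => if x ∈ Finset.univ.map ⟨σ, hσ⟩ then (1 : K) else 0) * Wᵀ =
      W.submatrix id σ * (W.submatrix id σ)ᵀ := by
  ext a b
  rw [mul_apply, mul_apply]
  simp only [mul_diagonal, transpose_apply, submatrix_apply, id, mul_ite, mul_one, mul_zero,
    ite_mul, zero_mul]
  rw [Finset.sum_ite_mem, Finset.univ_inter, Finset.sum_map]
  rfl

theorem exists_forall_ne_zero_det_mul_diagonal_mul_transpose_ne_zero [Fintype K]
    (hK : 4 ≤ Fintype.card K) [Fintype ι] [DecidableEq ι] [Fintype κ] [DecidableEq κ]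
    {W : Matrix ι κ K} (hW : LinearIndependent K W.row) :
    ∃ v : κ → K, (∀ i, v i ≠ 0) ∧ (W * diagonal (v * v) * Wᵀ).det ≠ 0 := by
  obtain ⟨σ, hσ, hdet⟩ := exists_submatrix_det_ne_zero hW
  let v₀ : κ → K := fun x => if x ∈ Finset.univ.map ⟨σ, hσ⟩ then 1 else 0
  refine Function.exists_forall_ne_zero_of_forall_exists_update _ (fun v i hv => ?_) (v₀ := v₀) ?_
  · obtain ⟨a, b, hab⟩ := exists_det_add_smul_vecMulVec_eq
      (W * diagonal (Function.update (v * v) i 0) * Wᵀ) (W.col i) (W.col i)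
    have hquad : ∀ t, (W * diagonal (Function.update v i t * Function.update v i t) * Wᵀ).det =
        a + b * t ^ 2 := fun t => by
      rw [← Function.update_mul, mul_diagonal_update_mul_transpose, hab, sq]
    obtain ⟨t, ht0, ht⟩ := exists_ne_zero_add_mul_sq_ne_zero hK (t₀ := v i)
      (by rwa [← hquad, Function.update_eq_self])
    exact ⟨t, ht0, by rwa [hquad]⟩
  · have hv₀ : v₀ * v₀ = v₀ := funext fun x => by simp [v₀]
    rw [hv₀, mul_diagonal_indicator_mul_transpose, det_mul, det_transpose]
    exact mul_ne_zero hdet hdet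

end Matrix

theorem Submodule.exists_linearIndependent_row_span_eq {K κ : Type*} [Field K] [Finite κ]
    (C : Submodule K (κ → K)) :
    ∃ (k : ℕ) (W : Matrix (Fin k) κ K), LinearIndependent K W.row ∧
      Submodule.span K (Set.range W.row) = C := by
  let b := Module.finBasis K C
  refine ⟨_, of fun j => (b j : κ → K), b.linearIndependent.map' C.subtype C.ker_subtype, ?_⟩
  change Submodule.span K (Set.range (C.subtype ∘ b)) = C
  rw [Set.range_comp, ← Submodule.map_span, b.span_eq, Submodule.map_top, Submodule.range_subtype]

theorem map_mulLeft_span_row {K ι κ : Type*} [Field K] [Fintype κ] [DecidableEq κ]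
    (W : Matrix ι κ K) (v : κ → K) :
    (Submodule.span K (Set.range W.row)).map (LinearMap.mulLeft K v) =
      Submodule.span K (Set.range (W * diagonal v).row) := by
  rw [Submodule.map_span, ← Set.range_comp]
  congr 2
  ext j i
  simp only [row, mul_diagonal]
  exact mul_comm _ _

theorem span_row_inf_dualCode_eq_bot {K ι : Type*} [Field K] [Fintype ι] [DecidableEq ι] {n : ℕ}
    {W : Matrix ι (Fin n) K} (h : (W * Wᵀ).det ≠ 0) :
    Submodule.span K (Set.range W.row) ⊓ dualCode (Submodule.span K (Set.range W.row)) = ⊥ := by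
  refine (Submodule.eq_bot_iff _).mpr fun y ⟨hy, hdual⟩ => ?_
  obtain ⟨α, rfl⟩ := (Submodule.mem_span_range_iff_exists_fun K).mp hy
  rw [row, ← vecMul_eq_sum] at hdual ⊢
  have hWy : W *ᵥ (α ᵥ* W) = 0 := funext fun l =>
    (Finset.sum_congr rfl fun i _ => mul_comm _ _).trans
      (hdual (W l) (Submodule.subset_span ⟨l, rfl⟩))
  have hα : α ᵥ* (W * Wᵀ) = 0 := by rw [← vecMul_vecMul, vecMul_transpose, hWy]
  rw [eq_zero_of_vecMul_eq_zero h hα, zero_vecMul]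

/-- Every linear code over a field with at least 4 elements is scalar
(hence monomial) equivalent to an LCD code. -/
theorem exists_scaling_LCD {F : Type*} [Field F] [Fintype F]
    (hq : 4 ≤ Fintype.card F) {n : ℕ} (C : Submodule F (Fin n → F)) :
    ∃ v : Fin n → F, (∀ i, v i ≠ 0) ∧
      Submodule.map (LinearMap.mulLeft F v) C ⊓
        dualCode (Submodule.map (LinearMap.mulLeft F v) C) = ⊥ := by
  obtain ⟨k, W, hW, rfl⟩ := C.exists_linearIndependent_row_span_eq
  obtain ⟨v, hv, hdet⟩ := exists_forall_ne_zero_det_mul_diagonal_mul_transpose_ne_zero hq hW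
  refine ⟨v, hv, ?_⟩
  rw [map_mulLeft_span_row]
  exact span_row_inf_dualCode_eq_bot (by rwa [mul_diagonal_mul_transpose_mul_diagonal])
end

section
/- Let C be a k-dimensional linear code of length n over F_q, let h be the dimension of the hull H(C) = C ∩ C^⊥, and let r = k − h. Then C has a generator matrix G₀ such that G₀G₀ᵀ is the block matrix with an h×h zero block in the upper left, zero off-diagonal blocks, and an invertible r×r matrix P in the lower right. -/
/-! Split `C = H ⊕ W` with `H` the hull. A basis of `H` is orthogonal to all of `C`, which gives
the zero blocks, while on `W` the dot product is nondegenerate, so the Gram matrix of a basis of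
`W` is invertible. -/

open scoped Matrix

namespace Matrix

variable {K m ι : Type*} [Field K] [Fintype m] [DecidableEq m] [Fintype ι]

theorem isUnit_mul_transpose_of_nondegenerate (B : Matrix m ι K)
    (hB : LinearIndependent K B.row)
    (hnd : ∀ w ∈ Submodule.span K (Set.range B.row),
      (∀ x ∈ Submodule.span K (Set.range B.row), x ⬝ᵥ w = 0) → w = 0) :
    IsUnit (B * Bᵀ) := by
  rw [← vecMul_injective_iff] at hB
  rw [← range_vecMulLinear] at hnd
  rw [← vecMul_injective_iff_isUnit, ← coe_vecMulLinear, injective_iff_map_eq_zero]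
  intro u hu
  have hBw : B *ᵥ (u ᵥ* B) = 0 := by
    rwa [← vecMul_transpose, vecMul_vecMul]
  have hw : u ᵥ* B = 0 := by
    refine hnd _ ⟨u, rfl⟩ ?_
    rintro _ ⟨u', rfl⟩
    rw [vecMulLinear_apply, ← dotProduct_mulVec, hBw, dotProduct_zero]
  exact hB (hw.trans (zero_vecMul B).symm)

end Matrix

theorem Submodule.exists_matrix_rows_basis {K ι : Type*} [Field K] [Finite ι]
    (p : Submodule K (ι → K)) {m : ℕ} (hm : Module.finrank K p = m) :
    ∃ B : Matrix (Fin m) ι K,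
      LinearIndependent K B.row ∧ Submodule.span K (Set.range B.row) = p := by
  let b := Module.finBasisOfFinrankEq K p hm
  refine ⟨Matrix.of fun i => b i, b.linearIndependent.map' p.subtype p.ker_subtype, ?_⟩
  change Submodule.span K (Set.range (p.subtype ∘ b)) = p
  rw [Set.range_comp, Submodule.span_image, b.span_eq, Submodule.map_subtype_top]

section

variable {F : Type*} [Field F] {n : ℕ}

theorem mem_dualCode_iff {C : Submodule F (Fin n → F)} {x : Fin n → F} :
    x ∈ dualCode C ↔ ∀ c ∈ C, x ⬝ᵥ c = 0 :=
  Iff.rfl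

theorem mul_transpose_eq_zero_of_rows_mem_dualCode {m m' : Type*} {C : Submodule F (Fin n → F)}
    {A : Matrix m (Fin n) F} {A' : Matrix m' (Fin n) F}
    (hA : ∀ i, A i ∈ dualCode C) (hA' : ∀ j, A' j ∈ C) : A * A'ᵀ = 0 := by
  ext i j
  exact hA i (A' j) (hA' j)

theorem fromRows_mul_transpose_eq_fromBlocks_of_mem_hull {m m' : Type*}
    {C : Submodule F (Fin n → F)} {A : Matrix m (Fin n) F} {B : Matrix m' (Fin n) F}
    (hA : ∀ i, A i ∈ C ⊓ dualCode C) (hB : ∀ j, B j ∈ C) :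
    Matrix.fromRows A B * (Matrix.fromRows A B)ᵀ = Matrix.fromBlocks 0 0 0 (B * Bᵀ) := by
  have hAB : A * Bᵀ = 0 := mul_transpose_eq_zero_of_rows_mem_dualCode (fun i => (hA i).2) hB
  have hBA : B * Aᵀ = 0 := by
    rw [← Matrix.transpose_transpose (B * Aᵀ), Matrix.transpose_mul, Matrix.transpose_transpose,
      hAB, Matrix.transpose_zero]
  rw [Matrix.transpose_fromRows, Matrix.fromRows_mul_fromCols, hAB, hBA,
    mul_transpose_eq_zero_of_rows_mem_dualCode (fun i => (hA i).2) (fun j => (hA j).1)]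

/-- A vector of `W` orthogonal to `W` is also orthogonal to the hull (which lies in `C^⊥`), hence
to all of `C`, so it lies in the hull and in `W`. -/
theorem eq_zero_of_orthogonal_of_mem_compl_hull {C W : Submodule F (Fin n → F)}
    (hdisj : Disjoint (C ⊓ dualCode C) W) (hsup : C ⊓ dualCode C ⊔ W = C)
    {w : Fin n → F} (hw : w ∈ W) (hortho : ∀ x ∈ W, x ⬝ᵥ w = 0) : w = 0 := by
  have hwC : w ∈ C := hsup ▸ Submodule.mem_sup_right hw
  have hwdual : w ∈ dualCode C := by
    refine mem_dualCode_iff.mpr fun c hc => ?_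
    rw [← hsup] at hc
    obtain ⟨a, ha, b, hb, rfl⟩ := Submodule.mem_sup.mp hc
    rw [dotProduct_add, dotProduct_comm w a, dotProduct_comm w b, hortho b hb, add_zero]
    exact (Submodule.mem_inf.mp ha).2 w hwC
  exact (Submodule.disjoint_def.mp hdisj) w ⟨hwC, hwdual⟩ hw

end

theorem exists_generator_matrix_hull_block_form_general {F : Type*} [Field F]
    {n k h r : ℕ} (C : Submodule F (Fin n → F))
    (hk : Module.finrank F C = k)
    (hh : Module.finrank F ↥(C ⊓ dualCode C) = h)
    (hkhr : k = h + r) :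
    ∃ (G₀ : Matrix (Fin k) (Fin n) F) (P : Matrix (Fin r) (Fin r) F),
      LinearIndependent F (fun i : Fin k => G₀ i) ∧
      Submodule.span F (Set.range fun i : Fin k => G₀ i) = C ∧
      IsUnit P ∧
      G₀ * G₀.transpose =
        Matrix.submatrix
          (Matrix.fromBlocks (0 : Matrix (Fin h) (Fin h) F) 0 0 P)
          ((finCongr hkhr).trans finSumFinEquiv.symm)
          ((finCongr hkhr).trans finSumFinEquiv.symm) := by
  obtain ⟨W, hdisj, hsup⟩ :=
    IsModularLattice.exists_disjoint_and_sup_eq (inf_le_left : C ⊓ dualCode C ≤ C)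
  have hW : Module.finrank F W = r := by
    have := Submodule.finrank_sup_add_finrank_inf_eq (C ⊓ dualCode C) W
    rw [hsup, hdisj.eq_bot, finrank_bot, hk, hh, hkhr] at this
    omega
  obtain ⟨BH, hBH, hspanH⟩ := (C ⊓ dualCode C).exists_matrix_rows_basis hh
  obtain ⟨BW, hBW, hspanW⟩ := W.exists_matrix_rows_basis hW
  have hBHmem (i : Fin h) : BH i ∈ C ⊓ dualCode C := hspanH ▸ Submodule.subset_span ⟨i, rfl⟩
  have hBWC (j : Fin r) : BW j ∈ C :=
    hsup ▸ Submodule.mem_sup_right (hspanW ▸ Submodule.subset_span ⟨j, rfl⟩)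
  let e := (finCongr hkhr).trans finSumFinEquiv.symm
  have hli : LinearIndependent F (Matrix.fromRows BH BW).row :=
    hBH.sum_type hBW (hspanH ▸ hspanW ▸ hdisj)
  refine ⟨(Matrix.fromRows BH BW).submatrix e id, BW * BWᵀ, hli.comp e e.injective, ?_, ?_, ?_⟩
  · change Submodule.span F (Set.range (Sum.elim BH.row BW.row ∘ e)) = C
    rw [EquivLike.range_comp, Set.Sum.elim_range, Submodule.span_union, hspanH, hspanW, hsup]
  · refine BW.isUnit_mul_transpose_of_nondegenerate hBW fun w hw hortho => ?_
    rw [hspanW] at hw hortho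
    exact eq_zero_of_orthogonal_of_mem_compl_hull hdisj hsup hw hortho
  · rw [Matrix.transpose_submatrix, ← Matrix.submatrix_mul _ _ _ _ _ Function.bijective_id,
      fromRows_mul_transpose_eq_fromBlocks_of_mem_hull hBHmem hBWC]

/-- A `k`-dimensional code `C` with hull of dimension `h` has a generator
matrix `G₀` (a matrix whose rows form a basis of `C`) such that
`G₀ * G₀ᵀ` is block diagonal with an `h × h` zero block in the upper left and
an invertible `r × r` block `P` in the lower right, where `r = k - h`. -/
theorem exists_generator_matrix_hull_block_form {F : Type*} [Field F]
    {n k h r : ℕ} (C : Submodule F (Fin n → F))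
    (hk : Module.finrank F C = k)
    (hh : Module.finrank F ↥(C ⊓ dualCode C) = h)
    (hr : r = k - h) (hkhr : k = h + r) :
    ∃ (G₀ : Matrix (Fin k) (Fin n) F) (P : Matrix (Fin r) (Fin r) F),
      LinearIndependent F (fun i : Fin k => G₀ i) ∧
      Submodule.span F (Set.range fun i : Fin k => G₀ i) = C ∧
      IsUnit P ∧
      G₀ * G₀.transpose =
        Matrix.submatrix
          (Matrix.fromBlocks (0 : Matrix (Fin h) (Fin h) F) 0 0 P)
          ((finCongr hkhr).trans finSumFinEquiv.symm)
          ((finCongr hkhr).trans finSumFinEquiv.symm) :=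
  exists_generator_matrix_hull_block_form_general C hk hh hkhr
end

section
/- Let C be a k-dimensional linear code of length n over F_q with generator matrix G. Then C is an LCD code (i.e. C ∩ C^⊥ = {0}) if and only if the k×k matrix GGᵀ is nonsingular. -/
lemma vecMul_eq_sum' {F : Type*} [Field F] {n k : ℕ} (v : Fin k → F)
    (G : Matrix (Fin k) (Fin n) F) : Matrix.vecMul v G = ∑ i, v i • G i := by
  ext j
  simp [Matrix.vecMul, dotProduct, Finset.sum_apply]

/-- A code `C` with generator matrix `G` is LCD if and only if `G * Gᵀ` is
nonsingular. -/
theorem lcd_iff_det_mul_transpose_ne_zero {F : Type*} [Field F]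
    {n k : ℕ} (C : Submodule F (Fin n → F))
    (hk : Module.finrank F C = k)
    (G : Matrix (Fin k) (Fin n) F)
    (hGli : LinearIndependent F (fun i : Fin k => G i))
    (hGspan : Submodule.span F (Set.range fun i : Fin k => G i) = C) :
    C ⊓ dualCode C = ⊥ ↔ (G * G.transpose).det ≠ 0 := by
  constructor
  · intro h hdet
    obtain ⟨v, hv, hGv⟩ := (Matrix.exists_mulVec_eq_zero_iff).mpr hdet
    set x := Matrix.vecMul v G with hxdef
    have hxsum : x = ∑ i, v i • G i := by
      rw [hxdef, vecMul_eq_sum']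
    have hxC : x ∈ C := by
      rw [← hGspan, hxsum]
      exact Submodule.sum_mem _ fun i _ =>
        Submodule.smul_mem _ _ (Submodule.subset_span ⟨i, rfl⟩)
    have hGx : G.mulVec x = 0 := by
      rw [hxdef, ← Matrix.mulVec_transpose, Matrix.mulVec_mulVec, hGv]
    have hxD : x ∈ dualCode C := by
      intro c hc
      rw [← hGspan] at hc
      induction hc using Submodule.span_induction with
      | mem c hc =>
        obtain ⟨j, rfl⟩ := hc
        have := congrFun hGx j
        simpa [Matrix.mulVec, dotProduct, mul_comm] using this
      | zero => simp
      | add a b _ _ ha hb => simp [mul_add, Finset.sum_add_distrib, ha, hb]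
      | smul a c _ hc =>
        simp only [Pi.smul_apply, smul_eq_mul]
        rw [Finset.sum_congr rfl (fun i _ => by ring_nf : ∀ i ∈ Finset.univ,
          x i * (a * c i) = a * (x i * c i)), ← Finset.mul_sum, hc, mul_zero]
    have hx0 : x = 0 := by
      have : x ∈ C ⊓ dualCode C := ⟨hxC, hxD⟩
      rw [h] at this
      exact this
    apply hv
    have := linearIndependent_iff'.mp hGli Finset.univ v
    have hz : ∑ i, v i • G i = 0 := by rw [← hxsum, hx0]
    ext i
    exact this hz i (Finset.mem_univ i)
  · intro hdet
    rw [Submodule.eq_bot_iff]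
    rintro x ⟨hxC, hxD⟩
    rw [← hGspan] at hxC
    obtain ⟨v, hv⟩ := (Finsupp.mem_span_range_iff_exists_finsupp).mp hxC
    -- rewrite as a Fintype sum
    have hxv : x = Matrix.vecMul v G := by
      rw [vecMul_eq_sum', ← hv]
      rw [Finsupp.sum_fintype]
      intro i; simp
    have hGx : G.mulVec x = 0 := by
      ext j
      have hrow : (G j) ∈ C := by
        rw [← hGspan]; exact Submodule.subset_span ⟨j, rfl⟩
      have := hxD (G j) hrow
      simpa [Matrix.mulVec, dotProduct, mul_comm] using this
    have hGGv : (G * G.transpose).mulVec v = 0 := by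
      rw [← Matrix.mulVec_mulVec, Matrix.mulVec_transpose, ← hxv, hGx]
    have hv0 : (v : Fin k → F) = 0 := by
      by_contra hne
      exact hdet ((Matrix.exists_mulVec_eq_zero_iff).mp ⟨v, hne, hGGv⟩)
    rw [hxv, hv0, Matrix.zero_vecMul]
end

section
/- Let f be a nonzero polynomial in F_q[X₁, …, Xₙ] such that the degree of f in the variable X_j is at most q − 2 for every j ∈ {1, …, n}. Then there exists a point x ∈ (F_q \ {0})^n such that f(x) ≠ 0. -/
private lemma aux_exists {F : Type*} [Field F] [Fintype F] :
    ∀ (n : ℕ) (f : MvPolynomial (Fin n) F), f ≠ 0 →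
    (∀ j : Fin n, f.degreeOf j ≤ Fintype.card F - 2) →
    ∃ x : Fin n → F, (∀ i, x i ≠ 0) ∧ MvPolynomial.eval x f ≠ 0 := by
  intro n
  induction n with
  | zero =>
    intro f hf _
    refine ⟨Fin.elim0, fun i => i.elim0, ?_⟩
    have hc := MvPolynomial.eq_C_of_isEmpty f
    rw [hc, MvPolynomial.eval_C]
    intro h
    exact hf (by rw [hc, h, map_zero])
  | succ n ih =>
    intro f hf hdeg
    classical
    set g := MvPolynomial.finSuccEquiv F n f with hg
    have hg0 : g ≠ 0 := by
      simpa [hg] using (EmbeddingLike.map_ne_zero_iff (f := MvPolynomial.finSuccEquiv F n)).mpr hf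
    have hlc : g.coeff g.natDegree ≠ 0 := Polynomial.leadingCoeff_ne_zero.mpr hg0
    have hdegc : ∀ j : Fin n, (g.coeff g.natDegree).degreeOf j ≤ Fintype.card F - 2 :=
      fun j => le_trans (MvPolynomial.degreeOf_coeff_finSuccEquiv f j g.natDegree) (hdeg j.succ)
    obtain ⟨x, hx, hex⟩ := ih (g.coeff g.natDegree) hlc hdegc
    set p := g.map (MvPolynomial.eval x) with hp
    have hp0 : p ≠ 0 := by
      intro h
      apply hex
      have := congrArg (fun q => Polynomial.coeff q g.natDegree) h
      simpa [hp, Polynomial.coeff_map] using this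
    have hcard2 : 2 ≤ Fintype.card F := Fintype.one_lt_card
    have hdegp : p.natDegree ≤ Fintype.card F - 2 := by
      calc p.natDegree ≤ g.natDegree := Polynomial.natDegree_map_le
        _ = f.degreeOf 0 := MvPolynomial.natDegree_finSuccEquiv f
        _ ≤ Fintype.card F - 2 := hdeg 0
    have hs : p.natDegree < (Finset.univ.erase (0 : F)).card := by
      rw [Finset.card_erase_of_mem (Finset.mem_univ 0), Finset.card_univ]
      omega
    have : ∃ y ∈ Finset.univ.erase (0 : F), p.eval y ≠ 0 := by
      by_contra h
      push_neg at h
      exact hp0 (Polynomial.eq_zero_of_natDegree_lt_card_of_eval_eq_zero' p _ h hs)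
    obtain ⟨y, hy, hey⟩ := this
    refine ⟨Fin.cons y x, ?_, ?_⟩
    · intro i
      refine Fin.cases ?_ ?_ i
      · simpa using Finset.ne_of_mem_erase hy
      · intro j; simpa using hx j
    · rw [MvPolynomial.eval_eq_eval_mv_eval' x y f]
      exact hey

/-- A nonzero polynomial over `F_q` whose degree in each variable is at most
`q - 2` has a nonvanishing point with all coordinates nonzero. -/
theorem exists_nonzero_eval_of_degreeOf_le {F : Type*} [Field F] [Fintype F]
    {n : ℕ} (f : MvPolynomial (Fin n) F) (hf : f ≠ 0)
    (hdeg : ∀ j : Fin n, f.degreeOf j ≤ Fintype.card F - 2) :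
    ∃ x : Fin n → F, (∀ i, x i ≠ 0) ∧ MvPolynomial.eval x f ≠ 0 :=
  aux_exists n f hf hdeg
end

section
/- Let q be a prime power and let f ∈ F_q[X₁, …, Xₙ]. Then f vanishes at every point of (F_q \ {0})^n if and only if f belongs to the ideal of F_q[X₁, …, Xₙ] generated by the polynomials X_j^{q−1} − 1 for j = 1, …, n. (In other words, the ideal generated by X₁^{q−1} − 1, …, Xₙ^{q−1} − 1 is the vanishing ideal of (F_q \ {0})^n.) -/
/-!
Over a domain `R` with finitely many units, `∏ u : Rˣ, (X - u) = X ^ #Rˣ - 1`. Hence Alon's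
combinatorial Nullstellensatz, applied to the grid `(Rˣ)ⁿ`, writes every polynomial vanishing
there as a combination of the `X i ^ #Rˣ - 1`; conversely these vanish on `(Rˣ)ⁿ` by Lagrange's
theorem in `Rˣ`. For a finite field, `#Fˣ = q - 1` and the units are the nonzero elements.
-/

theorem Polynomial.prod_units_X_sub_C {R : Type*} [CommRing R] [IsDomain R] [Fintype Rˣ] :
    ∏ u : Rˣ, (Polynomial.X - Polynomial.C (u : R)) = Polynomial.X ^ Fintype.card Rˣ - 1 := by
  classical
  simpa [Lagrange.nodal, Fintype.card_congr Subgroup.topEquiv.toEquiv] using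
    Lagrange.nodal_subgroup_eq_X_pow_card_sub_one (⊤ : Subgroup Rˣ)

namespace MvPolynomial

variable {R σ : Type*} [CommRing R] [Fintype Rˣ]

theorem prod_units_X_sub_C [IsDomain R] (i : σ) :
    ∏ u : Rˣ, (X i - C (u : R)) = (X i ^ Fintype.card Rˣ - 1 : MvPolynomial σ R) := by
  simpa using
    congrArg (Polynomial.eval₂RingHom C (X i : MvPolynomial σ R)) Polynomial.prod_units_X_sub_C

theorem eval_eq_zero_of_mem_span_X_pow_card_units_sub_one {f : MvPolynomial σ R}
    (hf : f ∈ Ideal.span (Set.range fun i : σ => X i ^ Fintype.card Rˣ - 1))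
    {x : σ → R} (hx : ∀ i, IsUnit (x i)) : eval x f = 0 := by
  refine (Ideal.span_le (I := RingHom.ker (eval x)) |>.mpr ?_) hf
  rintro _ ⟨i, rfl⟩
  obtain ⟨u, hu⟩ := hx i
  simp [← hu, ← Units.val_pow_eq_pow_val, pow_card_eq_one]

theorem mem_span_X_pow_card_units_sub_one_of_eval_eq_zero [IsDomain R] [Finite σ]
    {f : MvPolynomial σ R}
    (hf : ∀ x : σ → R, (∀ i, IsUnit (x i)) → eval x f = 0) :
    f ∈ Ideal.span (Set.range fun i : σ => X i ^ Fintype.card Rˣ - 1) := by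
  let units : Finset R := Finset.univ.map ⟨Units.val, Units.val_injective⟩
  obtain ⟨h, -, rfl⟩ := combinatorial_nullstellensatz_exists_linearCombination (fun _ => units)
    (fun _ => ⟨1, by simp [units]⟩) f
    (fun x hx => hf x fun i => (by simpa [units] using hx i : ∃ u : Rˣ, (u : R) = x i))
  simp only [units, Finset.prod_map, Function.Embedding.coeFn_mk, prod_units_X_sub_C]
  exact (Finsupp.range_linearCombination _).le (LinearMap.mem_range_self _ h)

theorem eval_eq_zero_iff_mem_span_X_pow_card_units_sub_one [IsDomain R] [Finite σ]
    (f : MvPolynomial σ R) :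
    (∀ x : σ → R, (∀ i, IsUnit (x i)) → eval x f = 0) ↔
      f ∈ Ideal.span (Set.range fun i : σ => X i ^ Fintype.card Rˣ - 1) :=
  ⟨mem_span_X_pow_card_units_sub_one_of_eval_eq_zero,
    fun hf _ => eval_eq_zero_of_mem_span_X_pow_card_units_sub_one hf⟩

end MvPolynomial

/-- The ideal generated by the polynomials `X_j^{q-1} - 1` is the vanishing
ideal of `(F_q \ {0})^n`: a polynomial vanishes at every point with all
coordinates nonzero if and only if it lies in this ideal. -/
theorem mem_span_pow_card_sub_one_sub_one_iff_vanishing {F : Type*} [Field F]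
    [Fintype F] {n : ℕ} (f : MvPolynomial (Fin n) F) :
    (∀ x : Fin n → F, (∀ i, x i ≠ 0) → MvPolynomial.eval x f = 0) ↔
      f ∈ Ideal.span
        (Set.range fun j : Fin n =>
          MvPolynomial.X j ^ (Fintype.card F - 1) - 1) := by
  classical
  simpa only [isUnit_iff_ne_zero, Fintype.card_units] using
    MvPolynomial.eval_eq_zero_iff_mem_span_X_pow_card_units_sub_one f
end

section
/- Let q be a prime power with q ≥ 4. If there exists a linear code over F_q with parameters [n, k, d]_q (length n, dimension k, minimum distance d), then there exists an LCD code over F_q with the same parameters [n, k, d]_q. -/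
/-- `C` is an `[n, k, d]` code: it has dimension `k` and minimum Hamming
weight of a nonzero codeword equal to `d`. -/
def HasParams {F : Type*} [Field F] [DecidableEq F] {n : ℕ}
    (C : Submodule F (Fin n → F)) (k d : ℕ) : Prop :=
  Module.finrank F C = k ∧
    (∀ c ∈ C, c ≠ 0 → d ≤ hammingNorm c) ∧
    ∃ c ∈ C, c ≠ 0 ∧ hammingNorm c = d

/-!
Scaling the coordinates by nonzero `a l` is a Hamming isometry, and the scaled code, generated by
`B * diagonal a`, is LCD as soon as its Gram matrix `B * diagonal (a * a) * Bᵀ` is nonsingular.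
The determinant of `B * diagonal y * Bᵀ` is affine in each `y l` (a rank-one update), and it is
nonzero when `y` is the indicator of `k` independent columns. Hence it stays nonzero while the
coordinates of `y` are moved one at a time into `{1, x * x}`, for some `x ≠ 0` with `x * x ≠ 1`;
such an `x` exists because `q ≥ 4`.
-/

open Matrix

namespace Matrix

section CommRing
variable {m ι R : Type*} [Fintype ι] [DecidableEq ι] [CommRing R]

theorem mul_diagonal_update_mul_transpose_s8 (B : Matrix m ι R) (y : ι → R) (l : ι) (t : R) :
    B * diagonal (Function.update y l t) * Bᵀ
      = B * diagonal (Function.update y l 0) * Bᵀ + vecMulVec (t • Bᵀ l) (Bᵀ l) := by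
  have hy : Function.update y l t = Function.update y l 0 + Pi.single l t := by
    ext p; rcases eq_or_ne p l with rfl | h <;> simp [*]
  rw [hy, Pi.add_def, ← diagonal_add, Matrix.mul_add, Matrix.add_mul]
  congr 1
  ext i j
  rw [mul_apply]
  simp [mul_diagonal, Pi.single_apply, vecMulVec_apply]
  ring

theorem mul_diagonal_mul_transpose_mul_diagonal_s8 (B : Matrix m ι R) (a : ι → R) :
    B * diagonal a * (B * diagonal a)ᵀ = B * diagonal (a * a) * Bᵀ := by
  rw [transpose_mul, diagonal_transpose, Matrix.mul_assoc, ← Matrix.mul_assoc (diagonal a),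
    diagonal_mul_diagonal, ← Matrix.mul_assoc]
  rfl

variable [Fintype m] [DecidableEq m]

theorem det_add_vecMulVec (A : Matrix m m R) (u v : m → R) :
    (A + vecMulVec u v).det = A.det + ∑ i, u i * (A.updateRow i v).det := by
  -- Add `u i • v` to the rows `i ∈ s` one at a time: each step contributes
  -- `u i * det (A.updateRow i v)`, the cross terms having two rows equal to `v`.
  suffices key : ∀ (s : Finset m) (A : Matrix m m R),
      (A + vecMulVec (s.piecewise u 0) v).det = A.det + ∑ i ∈ s, u i * (A.updateRow i v).det by
    simpa using key Finset.univ A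
  intro s
  induction s using Finset.induction_on with
  | empty => intro A; simp
  | @insert a s ha ih =>
    intro A
    have hsa : s.piecewise u 0 a = 0 := by simp [ha]
    have hrow : A + vecMulVec ((insert a s).piecewise u 0) v
        = (A + vecMulVec (s.piecewise u 0) v).updateRow a (A a + u a • v) := by
      ext i j
      rcases eq_or_ne i a with rfl | hi
      · simp [vecMulVec_apply]
      · simp [vecMulVec_apply, Finset.piecewise_insert, hi]
    have hself : (A + vecMulVec (s.piecewise u 0) v).updateRow a (A a)
        = A + vecMulVec (s.piecewise u 0) v := by
      ext i j
      rcases eq_or_ne i a with rfl | hi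
      · simp [vecMulVec_apply, hsa]
      · simp [updateRow_ne hi]
    have hupd : (A + vecMulVec (s.piecewise u 0) v).updateRow a v
        = A.updateRow a v + vecMulVec (s.piecewise u 0) v := by
      ext i j
      rcases eq_or_ne i a with rfl | hi
      · simp [vecMulVec_apply, hsa]
      · simp [updateRow_ne hi]
    have hzero : ∑ i ∈ s, u i * ((A.updateRow a v).updateRow i v).det = 0 :=
      Finset.sum_eq_zero fun i hi => by
        have hia : i ≠ a := ne_of_mem_of_not_mem hi ha
        rw [det_zero_of_row_eq hia (by simp [updateRow_ne hia.symm]), mul_zero]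
    rw [hrow, det_updateRow_add, det_updateRow_smul, hself, hupd, ih, ih, hzero,
      Finset.sum_insert ha]
    ring

theorem exists_det_mul_diagonal_update_mul_transpose_eq_add_mul (B : Matrix m ι R) (y : ι → R)
    (l : ι) :
    ∃ α β : R, ∀ t, (B * diagonal (Function.update y l t) * Bᵀ).det = α + t * β := by
  refine ⟨(B * diagonal (Function.update y l 0) * Bᵀ).det,
    ∑ i, Bᵀ l i * ((B * diagonal (Function.update y l 0) * Bᵀ).updateRow i (Bᵀ l)).det, fun t => ?_⟩
  rw [mul_diagonal_update_mul_transpose_s8, det_add_vecMulVec, Finset.mul_sum]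
  simp only [Pi.smul_apply, smul_eq_mul, mul_assoc]

end CommRing

section Field
variable {m ι F : Type*} [Fintype m] [DecidableEq m] [Fintype ι] [Field F]

theorem exists_injective_det_submatrix_ne_zero (B : Matrix m ι F) (hB : LinearIndependent F B) :
    ∃ g : m → ι, Function.Injective g ∧ (B.submatrix id g).det ≠ 0 := by
  have hspan : Submodule.span F (Set.range Bᵀ) = ⊤ := by
    apply Submodule.eq_top_of_finrank_eq
    rw [Module.finrank_fintype_fun_eq_card, ← hB.rank_matrix, rank_eq_finrank_span_cols]
    rfl
  obtain ⟨κ, a, ha, haspan, hali⟩ := exists_linearIndependent' F Bᵀ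
  have : Fintype κ := Fintype.ofInjective a ha
  have hcard : Fintype.card κ = Fintype.card m := by
    rw [← finrank_span_eq_card hali, haspan, hspan, finrank_top, Module.finrank_fintype_fun_eq_card]
  let e : m ≃ κ := Fintype.equivOfCardEq hcard.symm
  refine ⟨a ∘ e, ha.comp e.injective, ?_⟩
  have hcols : LinearIndependent F (B.submatrix id (a ∘ e))ᵀ := hali.comp e e.injective
  exact (isUnit_iff_isUnit_det _).mp (linearIndependent_cols_iff_isUnit.mp hcols) |>.ne_zero

theorem exists_det_mul_diagonal_mul_transpose_ne_zero [DecidableEq ι] (B : Matrix m ι F)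
    (hB : LinearIndependent F B) : ∃ y : ι → F, (B * diagonal y * Bᵀ).det ≠ 0 := by
  obtain ⟨g, hg, hdet⟩ := exists_injective_det_submatrix_ne_zero B hB
  refine ⟨fun l => if l ∈ Finset.univ.image g then (1 : F) else 0, ?_⟩
  have hgram : B * diagonal (fun l => if l ∈ Finset.univ.image g then (1 : F) else 0) * Bᵀ
      = B.submatrix id g * (B.submatrix id g)ᵀ := by
    ext i j
    rw [mul_apply, mul_apply]
    simp only [mul_diagonal, transpose_apply, submatrix_apply, id, mul_ite, ite_mul, mul_one,
      mul_zero, zero_mul]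
    rw [Finset.sum_ite_mem, Finset.univ_inter, Finset.sum_image hg.injOn]
  rw [hgram, det_mul, det_transpose]
  exact mul_ne_zero hdet hdet

end Field

end Matrix

theorem exists_forall_eq_or_eq_and_apply_ne_zero {ι R : Type*} [Fintype ι] [DecidableEq ι]
    [CommRing R] [NoZeroDivisors R] (f : (ι → R) → R)
    (hf : ∀ y l, ∃ α β : R, ∀ t, f (Function.update y l t) = α + t * β)
    {s t : R} (hst : s ≠ t) {x : ι → R} (hx : f x ≠ 0) :
    ∃ y : ι → R, (∀ l, y l = s ∨ y l = t) ∧ f y ≠ 0 := by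
  suffices H : ∀ T : Finset ι, ∃ y : ι → R, (∀ l ∈ T, y l = s ∨ y l = t) ∧ f y ≠ 0 by
    obtain ⟨y, hy, hfy⟩ := H Finset.univ
    exact ⟨y, fun l => hy l (Finset.mem_univ l), hfy⟩
  intro T
  induction T using Finset.induction_on with
  | empty => exact ⟨x, by simp, hx⟩
  | @insert j T hj ih =>
    obtain ⟨y, hy, hfy⟩ := ih
    obtain ⟨α, β, hαβ⟩ := hf y j
    -- an affine function vanishing at two distinct points vanishes everywhere
    have hu : ∃ u, (u = s ∨ u = t) ∧ f (Function.update y j u) ≠ 0 := by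
      by_contra! h
      have hs := hαβ s ▸ h s (Or.inl rfl)
      have ht := hαβ t ▸ h t (Or.inr rfl)
      have hβ : β = 0 :=
        (mul_eq_zero.mp (by linear_combination hs - ht : (s - t) * β = 0)).resolve_left
          (sub_ne_zero.mpr hst)
      apply hfy
      rw [← Function.update_eq_self j y, hαβ, hβ]
      linear_combination hs - s * hβ
    obtain ⟨u, hu, hfu⟩ := hu
    refine ⟨Function.update y j u, fun l hl => ?_, hfu⟩
    rcases eq_or_ne l j with rfl | hlj
    · simpa using hu
    · simpa [hlj] using hy l ((Finset.mem_insert.mp hl).resolve_left hlj)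

theorem exists_ne_zero_mul_self_ne_one {F : Type*} [Field F] [Fintype F]
    (hq : 4 ≤ Fintype.card F) : ∃ x : F, x ≠ 0 ∧ x * x ≠ 1 := by
  classical
  by_contra! h
  have hsub : (Finset.univ : Finset F) ⊆ {0, 1, -1} := fun x _ => by
    by_cases hx : x = 0
    · simp [hx]
    · simpa [hx] using mul_self_eq_one_iff.mp (h x hx)
  have := (Finset.card_le_card hsub).trans Finset.card_le_three
  rw [Finset.card_univ] at this
  omega

section Code
variable {F : Type*} [Field F] {n : ℕ}

theorem inf_dualCode_span_eq_bot_of_det_ne_zero {m : Type*} [Fintype m] [DecidableEq m]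
    (B : Matrix m (Fin n) F) (hB : (B * Bᵀ).det ≠ 0) :
    Submodule.span F (Set.range B) ⊓ dualCode (Submodule.span F (Set.range B)) = ⊥ := by
  refine (Submodule.eq_bot_iff _).mpr fun x ⟨hx, hxdual⟩ => ?_
  obtain ⟨c, rfl⟩ := (Submodule.mem_span_range_iff_exists_fun F).mp hx
  have horth : B *ᵥ ∑ i, c i • B i = 0 := funext fun j => by
    simpa [mulVec, dotProduct, mul_comm] using hxdual (B j) (Submodule.subset_span ⟨j, rfl⟩)
  have hsum : ∑ i, c i • B i = Bᵀ *ᵥ c := by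
    rw [mulVec_transpose]; exact (vecMul_eq_sum ..).symm
  rw [hsum, mulVec_mulVec] at horth
  rw [hsum, eq_zero_of_mulVec_eq_zero hB horth, mulVec_zero]

theorem exists_linearIndependent_span_range_eq (C : Submodule F (Fin n → F)) {k : ℕ}
    (hk : Module.finrank F C = k) :
    ∃ B : Matrix (Fin k) (Fin n) F, LinearIndependent F B ∧ Submodule.span F (Set.range B) = C := by
  let b := Module.finBasisOfFinrankEq F C hk
  refine ⟨fun i => b i, b.linearIndependent.map' C.subtype C.ker_subtype, ?_⟩
  rw [show (fun i => (b i : Fin n → F)) = C.subtype ∘ b from rfl, Set.range_comp,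
    ← Submodule.map_span, b.span_eq, Submodule.map_subtype_top]

def scalingEquiv (a : Fin n → F) (ha : ∀ i, a i ≠ 0) : (Fin n → F) ≃ₗ[F] (Fin n → F) :=
  LinearEquiv.piCongrRight fun i => LinearEquiv.smulOfNeZero F F (a i) (ha i)

theorem scalingEquiv_apply (a : Fin n → F) (ha : ∀ i, a i ≠ 0) (x : Fin n → F) :
    scalingEquiv a ha x = a * x :=
  rfl

theorem hammingNorm_scalingEquiv [DecidableEq F] (a : Fin n → F) (ha : ∀ i, a i ≠ 0)
    (x : Fin n → F) : hammingNorm (scalingEquiv a ha x) = hammingNorm x := by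
  simp [hammingNorm, scalingEquiv_apply, ha]

theorem map_scalingEquiv_span_range {m : Type*} (B : Matrix m (Fin n) F) (a : Fin n → F)
    (ha : ∀ i, a i ≠ 0) :
    (Submodule.span F (Set.range B)).map (scalingEquiv a ha : (Fin n → F) →ₗ[F] (Fin n → F))
      = Submodule.span F (Set.range (B * diagonal a)) := by
  rw [Submodule.map_span, ← Set.range_comp (f := (B : m → Fin n → F))]
  congr 2
  ext i l
  rw [mul_diagonal]
  exact mul_comm (a l) (B i l)

theorem HasParams.map_linearEquiv [DecidableEq F] {C : Submodule F (Fin n → F)} {k d : ℕ}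
    (hC : HasParams C k d) (e : (Fin n → F) ≃ₗ[F] (Fin n → F))
    (he : ∀ x, hammingNorm (e x) = hammingNorm x) :
    HasParams (C.map (e : (Fin n → F) →ₗ[F] (Fin n → F))) k d := by
  obtain ⟨hk, hmin, c, hc, hc0, hcd⟩ := hC
  refine ⟨(e.finrank_map_eq C).trans hk, ?_, e c, Submodule.mem_map_of_mem hc,
    e.map_ne_zero_iff.mpr hc0, (he c).trans hcd⟩
  rintro _ ⟨c, hc, rfl⟩ hc0
  exact (he c).symm ▸ hmin c hc (fun h => hc0 (by simp [h]))

end Code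

/-- If there is an `[n, k, d]_q` linear code with `q ≥ 4`, then there is an
LCD code with the same parameters `[n, k, d]_q`. -/
theorem exists_LCD_code_of_exists_code {F : Type*} [Field F] [DecidableEq F]
    [Fintype F] (hq : 4 ≤ Fintype.card F) {n k d : ℕ}
    (h : ∃ C : Submodule F (Fin n → F), HasParams C k d) :
    ∃ C : Submodule F (Fin n → F), HasParams C k d ∧ C ⊓ dualCode C = ⊥ := by
  obtain ⟨C, hC⟩ := h
  obtain ⟨B, hB, rfl⟩ := exists_linearIndependent_span_range_eq C hC.1
  obtain ⟨x, hx0, hx1⟩ := exists_ne_zero_mul_self_ne_one hq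
  obtain ⟨y₀, hy₀⟩ := exists_det_mul_diagonal_mul_transpose_ne_zero B hB
  obtain ⟨y, hy, hdet⟩ := exists_forall_eq_or_eq_and_apply_ne_zero
    (fun y : Fin n → F => (B * diagonal y * Bᵀ).det)
    (exists_det_mul_diagonal_update_mul_transpose_eq_add_mul B) hx1.symm hy₀
  have hsq : ∀ l, ∃ a : F, a ≠ 0 ∧ a * a = y l := fun l =>
    (hy l).elim (fun h => ⟨1, one_ne_zero, by rw [h, one_mul]⟩) (fun h => ⟨x, hx0, h.symm⟩)
  choose a ha hay using hsq
  refine ⟨_, hC.map_linearEquiv (scalingEquiv a ha) (hammingNorm_scalingEquiv a ha), ?_⟩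
  rw [map_scalingEquiv_span_range]
  apply inf_dualCode_span_eq_bot_of_det_ne_zero
  rwa [mul_diagonal_mul_transpose_mul_diagonal_s8, show a * a = y from funext hay]
end

section
/- Let q be a prime power with q ≥ 4 and let M be any k×k matrix over F_q. Then there exists a vector x = (x₁, …, x_k) ∈ (F_q \ {0})^k such that det(D(x₁², …, x_k²) + M) ≠ 0, where D(x₁², …, x_k²) denotes the diagonal matrix with entries x₁², …, x_k². -/
open Matrix

private lemma subm_indep {F : Type*} [Field F] {k : ℕ} (t s : F) (ts : Fin k → F)
    (M : Matrix (Fin (k+1)) (Fin (k+1)) F) (j : Fin (k+1)) :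
    (Matrix.diagonal (Fin.cons t ts) + M).submatrix Fin.succ j.succAbove =
    (Matrix.diagonal (Fin.cons s ts) + M).submatrix Fin.succ j.succAbove := by
  ext i l
  simp only [Matrix.submatrix_apply, Matrix.add_apply, Matrix.diagonal_apply]
  by_cases h : i.succ = j.succAbove l
  · rw [if_pos h, if_pos h, ← h, Fin.cons_succ, Fin.cons_succ]
  · rw [if_neg h, if_neg h]

private lemma subm_zero {F : Type*} [Field F] {k : ℕ} (t : F) (ts : Fin k → F)
    (M : Matrix (Fin (k+1)) (Fin (k+1)) F) :
    (Matrix.diagonal (Fin.cons t ts) + M).submatrix Fin.succ Fin.succ =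
    Matrix.diagonal ts + M.submatrix Fin.succ Fin.succ := by
  ext i l
  simp [Matrix.diagonal_apply, Fin.succ_inj]

private lemma det_affine {F : Type*} [Field F] {k : ℕ} (t : F) (ts : Fin k → F)
    (M : Matrix (Fin (k+1)) (Fin (k+1)) F) :
    (Matrix.diagonal (Fin.cons t ts) + M).det =
      t * (Matrix.diagonal ts + M.submatrix Fin.succ Fin.succ).det +
      (Matrix.diagonal (Fin.cons 0 ts) + M).det := by
  rw [Matrix.det_succ_row_zero, Matrix.det_succ_row_zero, Fin.sum_univ_succ,
    Fin.sum_univ_succ]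
  have htail : ∀ j : Fin k,
      (-1 : F) ^ ((j.succ : Fin (k+1)) : ℕ) *
        (Matrix.diagonal (Fin.cons t ts) + M) 0 j.succ *
        ((Matrix.diagonal (Fin.cons t ts) + M).submatrix Fin.succ
          (j.succ : Fin (k+1)).succAbove).det =
      (-1 : F) ^ ((j.succ : Fin (k+1)) : ℕ) *
        (Matrix.diagonal (Fin.cons 0 ts) + M) 0 j.succ *
        ((Matrix.diagonal (Fin.cons 0 ts) + M).submatrix Fin.succ
          (j.succ : Fin (k+1)).succAbove).det := by
    intro j
    have hE : (Matrix.diagonal (Fin.cons t ts) + M) 0 j.succ =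
        (Matrix.diagonal (Fin.cons 0 ts) + M) 0 j.succ := by
      simp [Matrix.diagonal_apply, (Fin.succ_ne_zero j).symm]
    rw [subm_indep t 0, hE]
  rw [Finset.sum_congr rfl (fun j _ => htail j)]
  rw [subm_indep t 0 ts M 0, Fin.succAbove_zero, subm_zero]
  simp [Matrix.diagonal_apply]
  ring

private lemma two_nonzero_sq {F : Type*} [Field F] [Fintype F]
    (hq : 4 ≤ Fintype.card F) : ∃ a b : F, a ≠ 0 ∧ b ≠ 0 ∧ a ^ 2 ≠ b ^ 2 := by
  classical
  have hcard : ({0, 1, -1} : Finset F).card < Fintype.card F := by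
    have h3 : ({0, 1, -1} : Finset F).card ≤ 3 := by
      apply le_trans (Finset.card_insert_le _ _)
      have := Finset.card_insert_le (1 : F) ({-1} : Finset F)
      simp at this ⊢
      omega
    omega
  rw [← Finset.card_univ] at hcard
  have hss : ({0, 1, -1} : Finset F) ⊂ Finset.univ :=
    Finset.ssubset_univ_iff.2 (fun h => by rw [h] at hcard; exact lt_irrefl _ hcard)
  obtain ⟨b, -, hb⟩ := Finset.exists_of_ssubset hss
  simp only [Finset.mem_insert, Finset.mem_singleton, not_or] at hb
  obtain ⟨hb0, hb1, hbm1⟩ := hb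
  refine ⟨1, b, one_ne_zero, hb0, ?_⟩
  intro h
  have h2 : (b - 1) * (b + 1) = 0 := by linear_combination -h
  rcases mul_eq_zero.1 h2 with h3 | h3
  · exact hb1 (sub_eq_zero.1 h3)
  · exact hbm1 (by linear_combination h3)

/-- For `q ≥ 4` and any `k × k` matrix `M` over `F_q`, there is a vector `x`
with all entries nonzero such that `det(D(x₁², …, x_k²) + M) ≠ 0`. -/
theorem exists_det_diagonal_sq_add_ne_zero {F : Type*} [Field F] [Fintype F]
    (hq : 4 ≤ Fintype.card F) {k : ℕ}
    (M : Matrix (Fin k) (Fin k) F) :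
    ∃ x : Fin k → F, (∀ i, x i ≠ 0) ∧
      (Matrix.diagonal (fun i => (x i) ^ 2) + M).det ≠ 0 := by
  induction k with
  | zero =>
    exact ⟨fun i => 1, fun i => i.elim0, by simp [Matrix.det_isEmpty]⟩
  | succ k ih =>
    obtain ⟨x', hx', hdet⟩ := ih (M.submatrix Fin.succ Fin.succ)
    obtain ⟨a, b, ha, hb, hab⟩ := two_nonzero_sq hq
    set ts : Fin k → F := fun i => x' i ^ 2 with hts
    set A := (Matrix.diagonal ts + M.submatrix Fin.succ Fin.succ).det with hA
    set c := (Matrix.diagonal (Fin.cons 0 ts) + M).det with hc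
    have key : ∀ t : F, (Matrix.diagonal (Fin.cons t ts) + M).det = t * A + c :=
      fun t => det_affine t ts M
    have hone : a ^ 2 * A + c ≠ 0 ∨ b ^ 2 * A + c ≠ 0 := by
      by_contra h
      push_neg at h
      have : (a ^ 2 - b ^ 2) * A = 0 := by linear_combination h.1 - h.2
      rcases mul_eq_zero.1 this with h' | h'
      · exact hab (sub_eq_zero.1 h')
      · exact hdet h'
    have hfinal : ∀ x0 : F, x0 ≠ 0 → x0 ^ 2 * A + c ≠ 0 →
        ∃ x : Fin (k+1) → F, (∀ i, x i ≠ 0) ∧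
          (Matrix.diagonal (fun i => (x i) ^ 2) + M).det ≠ 0 := by
      intro x0 hx0 hne
      refine ⟨Fin.cons x0 x', ?_, ?_⟩
      · intro i
        refine Fin.cases ?_ ?_ i
        · simpa using hx0
        · intro j; simpa using hx' j
      · have heq : (fun i => (Fin.cons x0 x' i) ^ 2) = Fin.cons (x0 ^ 2) ts := by
          funext i
          refine Fin.cases ?_ ?_ i <;> simp [hts]
        rw [heq, key]
        exact hne
    rcases hone with h | h
    · exact hfinal a ha h
    · exact hfinal b hb h
end

section
/- Let q be a prime power with q > 2 and let M be any k×k matrix over the field F_{q²}. Then there exists a vector x = (x₁, …, x_k) ∈ (F_{q²} \ {0})^k such that det(D(x₁^{q+1}, …, x_k^{q+1}) + M) ≠ 0, where D(x₁^{q+1}, …, x_k^{q+1}) denotes the diagonal matrix with entries x₁^{q+1}, …, x_k^{q+1}. -/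
/-- In a field with `q ^ 2` elements, `q > 2`, there are two nonzero elements
with distinct `(q+1)`-th powers. -/
lemma exists_two_pow_ne {F : Type*} [Field F] [Fintype F]
    {q : ℕ} (hF : Fintype.card F = q ^ 2) (hq : 2 < q) :
    ∃ a b : F, a ≠ 0 ∧ b ≠ 0 ∧ a ^ (q + 1) ≠ b ^ (q + 1) := by
  classical
  obtain ⟨g, hg⟩ := IsCyclic.exists_generator (α := Fˣ)
  have hcard : Fintype.card Fˣ = q ^ 2 - 1 := by
    rw [Fintype.card_units, hF]
  have horder : orderOf g = q ^ 2 - 1 := by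
    rw [orderOf_eq_card_of_forall_mem_zpowers hg, Nat.card_eq_fintype_card, hcard]
  refine ⟨(g : F), 1, Units.ne_zero g, one_ne_zero, ?_⟩
  intro h
  rw [one_pow] at h
  have hg1 : g ^ (q + 1) = 1 := by
    ext
    push_cast
    simpa using h
  have hdvd : orderOf g ∣ q + 1 := orderOf_dvd_of_pow_eq_one hg1
  have hle : orderOf g ≤ q + 1 := Nat.le_of_dvd (by omega) hdvd
  have h2 : q + 2 < q ^ 2 := by nlinarith
  omega

/-- For `q > 2` and any `k × k` matrix `M` over `F_{q²}`, there is a vector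
`x` with all entries nonzero such that
`det(D(x₁^{q+1}, …, x_k^{q+1}) + M) ≠ 0`. -/
theorem exists_det_diagonal_pow_add_ne_zero {F : Type*} [Field F] [Fintype F]
    {q : ℕ} (hF : Fintype.card F = q ^ 2) (hq : 2 < q) {k : ℕ}
    (M : Matrix (Fin k) (Fin k) F) :
    ∃ x : Fin k → F, (∀ i, x i ≠ 0) ∧
      (Matrix.diagonal (fun i => (x i) ^ (q + 1)) + M).det ≠ 0 := by
  induction k with
  | zero =>
      exact ⟨fun i => i.elim0, fun i => i.elim0, by
        rw [Matrix.det_fin_zero]; exact one_ne_zero⟩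
  | succ n ih =>
      obtain ⟨x', hx', hA⟩ := ih (M.submatrix Fin.succ Fin.succ)
      obtain ⟨a, b, ha, hb, hab⟩ := exists_two_pow_ne hF hq
      set y : Fin n → F := fun i => x' i ^ (q + 1) with hy
      set A : F := (Matrix.diagonal y + M.submatrix Fin.succ Fin.succ).det with hAdef
      set P : F → Matrix (Fin (n + 1)) (Fin (n + 1)) F :=
        fun t => Matrix.diagonal (Fin.cons t y) + M with hP
      -- P t as an updated row of P 0
      have hrow : ∀ t, P t = (P 0).updateRow 0
          (M 0 + t • (Pi.single 0 1 : Fin (n + 1) → F)) := by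
        intro t
        ext i j
        refine Fin.cases ?_ ?_ i
        · simp [hP, Matrix.updateRow_apply, Matrix.diagonal_apply, Pi.single_apply,
            eq_comm]
          split_ifs <;> ring
        · intro i'
          rw [Matrix.updateRow_ne (Fin.succ_ne_zero i')]
          by_cases hij : (i'.succ : Fin (n + 1)) = j
          · subst hij; simp [hP]
          · simp [hP, Matrix.diagonal_apply_ne _ hij]
      -- the cofactor
      have hsub : ∀ t, (P t).submatrix Fin.succ Fin.succ
          = Matrix.diagonal y + M.submatrix Fin.succ Fin.succ := by
        intro t
        ext i j
        by_cases hij : i = j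
        · subst hij; simp [hP]
        · simp [hP, Matrix.diagonal_apply, hij,
            fun h => hij (Fin.succ_injective n h)]
      have hE : ((P 0).updateRow 0 (Pi.single 0 1)).det = A := by
        rw [Matrix.det_succ_row_zero]
        rw [Finset.sum_eq_single 0]
        · have h1 : ((P 0).updateRow 0 (Pi.single 0 1)).submatrix Fin.succ
              ((0 : Fin (n + 1)).succAbove)
              = Matrix.diagonal y + M.submatrix Fin.succ Fin.succ := by
            rw [Fin.succAbove_zero]
            have h2 : ((P 0).updateRow 0 (Pi.single 0 1)).submatrix Fin.succ Fin.succ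
                = (P 0).submatrix Fin.succ Fin.succ := by
              ext i j
              simp [Matrix.updateRow_apply, Fin.succ_ne_zero]
            rw [h2, hsub]
          rw [h1]
          simp [hAdef]
        · intro j _ hj
          simp [Matrix.updateRow_apply, Pi.single_apply, hj.symm]
        · simp
      have hdet : ∀ t, (P t).det
          = ((P 0).updateRow 0 (M 0)).det + t * A := by
        intro t
        rw [hrow t, Matrix.det_updateRow_add]
        congr 1
        rw [Matrix.det_updateRow_smul, hE]
      -- choose a or b
      have hcons : ∀ c : F, (fun i => ((Fin.cons c x' : Fin (n + 1) → F) i) ^ (q + 1))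
          = Fin.cons (c ^ (q + 1)) y := by
        intro c
        funext i
        refine Fin.cases ?_ ?_ i <;> simp [hy]
      have hne : ∀ c : F, c ≠ 0 → (∀ i, (Fin.cons c x' : Fin (n + 1) → F) i ≠ 0) := by
        intro c hc i
        refine Fin.cases ?_ ?_ i
        · simpa using hc
        · intro i'; simpa using hx' i'
      by_cases hgood : (P (a ^ (q + 1))).det ≠ 0
      · refine ⟨Fin.cons a x', hne a ha, ?_⟩
        rw [hcons a]
        exact hgood
      · refine ⟨Fin.cons b x', hne b hb, ?_⟩
        rw [hcons b]
        push_neg at hgood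
        intro hzero
        rw [hdet] at hgood hzero
        have hz : (a ^ (q + 1) - b ^ (q + 1)) * A = 0 := by
          have h3 := sub_eq_zero_of_eq (hgood.trans hzero.symm)
          linear_combination h3
        rcases mul_eq_zero.mp hz with h | h
        · exact hab (sub_eq_zero.mp h)
        · exact hA h
end
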